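/- The 2-dimensional Lebesgue measure of the set of pairs (s,t) in the unit square [0,1]² for which the three lengths p = min(s,t), q = |s-t| and r = 1-max(s,t) satisfy 1/p + 1/q + 1/r > 2·max(1/p, 1/q, 1/r) equals (4/25)·(3·√5·ln((3+√5)/2) − 5). (This is the probability that the three pieces of a broken stick are the altitudes of a triangle.) -/

import Mathlib

open MeasureTheory Set Real

/-!
For `s < t` the pieces are `s`, `t - s`, `1 - t`, and the condition says that each reciprocal is
less than the sum of the other two. With Lean's `1 / 0 = 0` it fails whenever a piece is `0`, so
by the symmetry `(s, t) ↦ (t, s)` the answer is twice the area of the part of the triangle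
`0 < s < t < 1` (of area `1 / 2`) where it holds. The rest of that triangle is the disjoint union
of the three regions where one reciprocal is at least the sum of the other two. Affine maps of the
triangle permuting the pieces show that these have the same area, and the region where
`1 / (1 - t)` dominates is `t ≥ (1 - s + √(5 s² - 2 s + 1)) / 2`, the larger root of
`t (1 - t) = s (t - s)`. Its area `3/10 - (2√5/25) log((3 + √5)/2)` is an elementary integral,
computed with `arsinh`.
-/

section OrderedField

variable {α : Type*} [Field α] [LinearOrder α] [IsStrictOrderedRing α]

theorem two_mul_max_lt_add_iff (x y z : α) :
    2 * max x (max y z) < x + y + z ↔ x < y + z ∧ y < x + z ∧ z < x + y := by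
  rw [mul_max_of_nonneg _ _ zero_le_two, mul_max_of_nonneg _ _ zero_le_two, max_lt_iff,
    max_lt_iff]
  constructor <;> rintro ⟨h₁, h₂, h₃⟩ <;> refine ⟨?_, ?_, ?_⟩ <;> linarith

theorem one_div_add_one_div_le_one_div_iff {a b c : α} (ha : 0 < a) (hb : 0 < b) (hc : 0 < c) :
    1 / a + 1 / b ≤ 1 / c ↔ c * (a + b) ≤ a * b := by
  rw [div_add_div _ _ ha.ne' hb.ne', div_le_div_iff₀ (mul_pos ha hb) hc]
  constructor <;> intro h <;> linarith

def IsAltitudeTriple (u v w : α) : Prop :=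
  2 * max (1 / u) (max (1 / v) (1 / w)) < 1 / u + 1 / v + 1 / w

theorem isAltitudeTriple_iff {u v w : α} : IsAltitudeTriple u v w ↔
    1 / u < 1 / v + 1 / w ∧ 1 / v < 1 / u + 1 / w ∧ 1 / w < 1 / u + 1 / v :=
  two_mul_max_lt_add_iff _ _ _

theorem IsAltitudeTriple.ne_zero {u v w : α} (h : IsAltitudeTriple u v w) :
    u ≠ 0 ∧ v ≠ 0 ∧ w ≠ 0 := by
  rw [isAltitudeTriple_iff] at h
  refine ⟨?_, ?_, ?_⟩ <;> rintro rfl <;> simp only [div_zero] at h <;> linarith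

end OrderedField

section AddGroup

variable {G : Type*} [MeasurableSpace G] [AddGroup G] [MeasurableAdd₂ G] [MeasurableNeg G]
  (μ : Measure G) [SFinite μ] [μ.IsAddLeftInvariant] [μ.IsNegInvariant]

theorem measurePreserving_sub_swap (c : G) :
    MeasurePreserving (fun p : G × G => (c - p.2, c - p.1)) (μ.prod μ) (μ.prod μ) :=
  Measure.measurePreserving_swap.comp
    ((μ.measurePreserving_sub_left c).prod (μ.measurePreserving_sub_left c))

theorem measurePreserving_fst_sub_snd (c : G) :
    MeasurePreserving (fun p : G × G => (p.1, c + p.1 - p.2)) (μ.prod μ) (μ.prod μ) :=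
  (MeasurePreserving.id μ).skew_product (g := fun x y => c + x - y) (by fun_prop)
    (ae_of_all _ fun x => μ.map_sub_left_eq_self (c + x))

end AddGroup

section RegionBetween

variable {α : Type*} [MeasurableSpace α] {μ : Measure α} {f g : α → ℝ} {s : Set α}

theorem volume_graph_eq_zero (hf : Measurable f) :
    μ.prod volume {p : α × ℝ | p.2 = f p.1} = 0 := by
  rw [Measure.prod_apply (measurableSet_graph hf)]
  simp

theorem volume_region_between_co (hf : Measurable f) :
    μ.prod volume {p : α × ℝ | p.1 ∈ s ∧ p.2 ∈ Ico (f p.1) (g p.1)} =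
      μ.prod volume (regionBetween f g s) := by
  refine le_antisymm ?_ (measure_mono fun p ⟨hs, h⟩ => ⟨hs, Ioo_subset_Ico_self h⟩)
  calc _ ≤ μ.prod volume (regionBetween f g s ∪ {p | p.2 = f p.1}) := by
        refine measure_mono fun p ⟨hs, hf, hg⟩ => ?_
        rcases hf.eq_or_lt with h | h
        exacts [Or.inr h.symm, Or.inl ⟨hs, h, hg⟩]
    _ ≤ _ := by
        grw [measure_union_le, volume_graph_eq_zero hf, add_zero]

end RegionBetween

theorem volume_regionBetween_Ioo {f g : ℝ → ℝ} {a b : ℝ} (hab : a ≤ b) (hf : Continuous f)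
    (hg : Continuous g) (hfg : ∀ x ∈ Ioo a b, f x ≤ g x) :
    volume (regionBetween f g (Ioo a b)) = ENNReal.ofReal (∫ x in a..b, g x - f x) := by
  rw [Measure.volume_eq_prod, volume_regionBetween_eq_integral
    (hf.integrableOn_Icc.mono_set Ioo_subset_Icc_self)
    (hg.integrableOn_Icc.mono_set Ioo_subset_Icc_self) measurableSet_Ioo hfg,
    intervalIntegral.integral_of_le hab, integral_Ioc_eq_integral_Ioo]
  rfl

theorem hasDerivAt_sqrt_one_add_sq_primitive (x : ℝ) :
    HasDerivAt (fun x => (x * √(1 + x ^ 2) + arsinh x) / 2) √(1 + x ^ 2) x := by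
  have hpos : 0 < 1 + x ^ 2 := by positivity
  have hsqrt : HasDerivAt (fun x => √(1 + x ^ 2)) (2 * x / (2 * √(1 + x ^ 2))) x := by
    simpa using ((hasDerivAt_pow 2 x).const_add 1).sqrt hpos.ne'
  refine ((((hasDerivAt_id' x).mul hsqrt).add (hasDerivAt_arsinh x)).div_const 2).congr_deriv ?_
  have hne : √(1 + x ^ 2) ≠ 0 := (sqrt_pos.2 hpos).ne'
  field_simp
  rw [sq_sqrt hpos.le]
  ring

theorem integral_sqrt_one_add_sq (a b : ℝ) : ∫ x in a..b, √(1 + x ^ 2) =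
    (b * √(1 + b ^ 2) + arsinh b - (a * √(1 + a ^ 2) + arsinh a)) / 2 := by
  rw [intervalIntegral.integral_eq_sub_of_hasDerivAt
    (fun x _ => hasDerivAt_sqrt_one_add_sq_primitive x)
    (Continuous.intervalIntegrable (by fun_prop) _ _)]
  ring

theorem sqrt_one_add_half_sq : √(1 + (1 / 2) ^ 2) = √5 / 2 := by
  rw [show (1 : ℝ) + (1 / 2) ^ 2 = 5 / 2 ^ 2 by norm_num, sqrt_div' _ (by norm_num),
    sqrt_sq (by norm_num)]

theorem arsinh_two_add_arsinh_half : arsinh 2 + arsinh (1 / 2) = 2 * log ((3 + √5) / 2) := by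
  have h5 : √5 ^ 2 = 5 := sq_sqrt (by norm_num)
  rw [arsinh, arsinh, sqrt_one_add_half_sq, show (1 : ℝ) + 2 ^ 2 = 5 by norm_num,
    ← log_mul (by positivity) (by positivity), show (2 : ℝ) = (2 : ℕ) by norm_num,
    ← log_pow]
  congr 1
  linear_combination (1 / 4) * h5

theorem integral_sqrt_quadratic :
    ∫ s in (0 : ℝ)..1, √(5 * s ^ 2 - 2 * s + 1) =
      9 / 10 + 4 * √5 / 25 * log ((3 + √5) / 2) := by
  have h5 : √5 ^ 2 = 5 := sq_sqrt (by norm_num)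
  have hsubst (s : ℝ) :
      √(1 + (5 / 2 * s + -(1 / 2)) ^ 2) = √5 / 2 * √(5 * s ^ 2 - 2 * s + 1) := by
    rw [← sqrt_sq (by positivity : 0 ≤ √5 / 2), ← sqrt_mul (by positivity), div_pow, h5]
    ring_nf
  have hcomp := intervalIntegral.integral_comp_mul_add (a := 0) (b := 1)
    (fun x => √(1 + x ^ 2)) (by norm_num : (5 / 2 : ℝ) ≠ 0) (-(1 / 2))
  rw [show 5 / 2 * (0 : ℝ) + -(1 / 2) = -(1 / 2) by norm_num,
    show 5 / 2 * (1 : ℝ) + -(1 / 2) = 2 by norm_num, integral_sqrt_one_add_sq, arsinh_neg,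
    neg_sq, sqrt_one_add_half_sq, show (1 : ℝ) + 2 ^ 2 = 5 by norm_num, smul_eq_mul] at hcomp
  simp only [hsubst, intervalIntegral.integral_const_mul] at hcomp
  linear_combination (2 * √5 / 5) * hcomp + (2 * √5 / 25) * arsinh_two_add_arsinh_half +
    (9 / 50 - (∫ s in (0 : ℝ)..1, √(5 * s ^ 2 - 2 * s + 1)) / 5) * h5

def triangle : Set (ℝ × ℝ) := {p | 0 < p.1 ∧ p.1 < p.2 ∧ p.2 < 1}

def altitudeRegion : Set (ℝ × ℝ) :=
  triangle ∩ {p | IsAltitudeTriple p.1 (p.2 - p.1) (1 - p.2)}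

def failSet₁ : Set (ℝ × ℝ) := triangle ∩ {p | 1 / (p.2 - p.1) + 1 / (1 - p.2) ≤ 1 / p.1}

def failSet₂ : Set (ℝ × ℝ) := triangle ∩ {p | 1 / p.1 + 1 / (1 - p.2) ≤ 1 / (p.2 - p.1)}

def failSet₃ : Set (ℝ × ℝ) := triangle ∩ {p | 1 / p.1 + 1 / (p.2 - p.1) ≤ 1 / (1 - p.2)}

theorem measurableSet_triangle : MeasurableSet triangle := by
  unfold triangle
  measurability

theorem measurableSet_altitudeRegion : MeasurableSet altitudeRegion := by
  unfold altitudeRegion IsAltitudeTriple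
  exact measurableSet_triangle.inter (measurableSet_lt (by fun_prop) (by fun_prop))

theorem measurableSet_failSet₁ : MeasurableSet failSet₁ :=
  measurableSet_triangle.inter (measurableSet_le (by fun_prop) (by fun_prop))

theorem measurableSet_failSet₂ : MeasurableSet failSet₂ :=
  measurableSet_triangle.inter (measurableSet_le (by fun_prop) (by fun_prop))

theorem measurableSet_failSet₃ : MeasurableSet failSet₃ :=
  measurableSet_triangle.inter (measurableSet_le (by fun_prop) (by fun_prop))

theorem one_div_pos_of_mem_triangle {p : ℝ × ℝ} (hp : p ∈ triangle) :
    0 < 1 / p.1 ∧ 0 < 1 / (p.2 - p.1) ∧ 0 < 1 / (1 - p.2) := by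
  obtain ⟨h₀, h, h₁⟩ := hp
  exact ⟨one_div_pos.2 h₀, one_div_pos.2 (sub_pos.2 h), one_div_pos.2 (sub_pos.2 h₁)⟩

theorem triangle_eq_union :
    triangle = altitudeRegion ∪ (failSet₁ ∪ (failSet₂ ∪ failSet₃)) := by
  ext p
  simp only [altitudeRegion, failSet₁, failSet₂, failSet₃, mem_union, mem_inter_iff,
    mem_ofPred_eq, isAltitudeTriple_iff, ← not_lt]
  tauto

theorem disjoint_altitudeRegion_failSets :
    Disjoint altitudeRegion (failSet₁ ∪ (failSet₂ ∪ failSet₃)) := by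
  refine disjoint_left.2 fun p hA hF => ?_
  simp only [altitudeRegion, failSet₁, failSet₂, failSet₃, mem_union, mem_inter_iff,
    mem_ofPred_eq, isAltitudeTriple_iff, ← not_lt] at hA hF
  tauto

theorem disjoint_failSet₁ : Disjoint failSet₁ (failSet₂ ∪ failSet₃) := by
  refine disjoint_left.2 fun p ⟨hp, h⟩ hq => ?_
  obtain ⟨-, hb, hc⟩ := one_div_pos_of_mem_triangle hp
  rcases hq with ⟨-, h'⟩ | ⟨-, h'⟩ <;> rw [mem_ofPred_eq] at h h' <;> linarith

theorem disjoint_failSet₂ : Disjoint failSet₂ failSet₃ := by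
  refine disjoint_left.2 fun p ⟨hp, h⟩ ⟨_, h'⟩ => ?_
  obtain ⟨ha, -, -⟩ := one_div_pos_of_mem_triangle hp
  rw [mem_ofPred_eq] at h h'
  linarith

theorem volume_triangle : volume triangle = ENNReal.ofReal (1 / 2) := by
  have : triangle = regionBetween (fun x => x) (fun _ => 1) (Ioo 0 1) := by
    ext ⟨s, t⟩
    simp only [triangle, regionBetween, mem_ofPred_eq, mem_Ioo]
    constructor
    · rintro ⟨h₀, h, h₁⟩
      exact ⟨⟨h₀, h.trans h₁⟩, h, h₁⟩
    · rintro ⟨⟨h₀, -⟩, h, h₁⟩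
      exact ⟨h₀, h, h₁⟩
  rw [this, volume_regionBetween_Ioo zero_le_one (f := fun x => x) continuous_id continuous_const
    fun x hx => hx.2.le, intervalIntegral.integral_sub intervalIntegrable_const
    intervalIntegral.intervalIntegrable_id]
  norm_num

noncomputable def failBound (s : ℝ) : ℝ := (1 - s + √(5 * s ^ 2 - 2 * s + 1)) / 2

theorem lt_failBound {s : ℝ} (h₀ : 0 < s) (h₁ : s < 1) : s < failBound s := by
  have hD : 0 ≤ 5 * s ^ 2 - 2 * s + 1 := by nlinarith
  have := sq_sqrt hD
  have := sqrt_nonneg (5 * s ^ 2 - 2 * s + 1)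
  unfold failBound
  nlinarith

theorem failBound_le_one {s : ℝ} (h₀ : 0 ≤ s) (h₁ : s ≤ 1) : failBound s ≤ 1 := by
  have : √(5 * s ^ 2 - 2 * s + 1) ≤ 1 + s := sqrt_le_iff.2 ⟨by linarith, by nlinarith⟩
  unfold failBound
  linarith

theorem one_div_add_one_div_le_iff_failBound_le {s t : ℝ} (hs : 0 < s) (hst : s < t)
    (ht : t < 1) : 1 / s + 1 / (t - s) ≤ 1 / (1 - t) ↔ failBound s ≤ t := by
  have hD : 0 ≤ 5 * s ^ 2 - 2 * s + 1 := by nlinarith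
  have hr := sq_sqrt hD
  have hr₀ : 1 - s < √(5 * s ^ 2 - 2 * s + 1) := lt_sqrt_of_sq_lt (by nlinarith)
  -- the other root of `t (1 - t) = s (t - s)` is negative
  have hfactor : s * (t - s) - (1 - t) * (s + (t - s)) =
      (t - failBound s) * (t - (1 - s - √(5 * s ^ 2 - 2 * s + 1)) / 2) := by
    unfold failBound
    linear_combination (1 / 4 : ℝ) * hr
  rw [one_div_add_one_div_le_one_div_iff hs (sub_pos.2 hst) (sub_pos.2 ht), ← sub_nonneg, hfactor,
    mul_nonneg_iff_of_pos_right (by linarith), sub_nonneg]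

theorem failSet₃_eq : failSet₃ = {p | p.1 ∈ Ioo 0 1 ∧ p.2 ∈ Ico (failBound p.1) 1} := by
  ext ⟨s, t⟩
  simp only [failSet₃, triangle, mem_inter_iff, mem_ofPred_eq, mem_Ioo, mem_Ico]
  constructor
  · rintro ⟨⟨hs, hst, ht⟩, h⟩
    exact ⟨⟨hs, hst.trans ht⟩, (one_div_add_one_div_le_iff_failBound_le hs hst ht).1 h, ht⟩
  · rintro ⟨⟨hs, hs₁⟩, hb, ht⟩
    have hst := (lt_failBound hs hs₁).trans_le hb
    exact ⟨⟨hs, hst, ht⟩, (one_div_add_one_div_le_iff_failBound_le hs hst ht).2 hb⟩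

theorem continuous_failBound : Continuous failBound := by
  unfold failBound
  fun_prop

theorem volume_failSet₃ :
    volume failSet₃ = ENNReal.ofReal (∫ s in (0 : ℝ)..1, (1 - failBound s)) := by
  rw [failSet₃_eq, Measure.volume_eq_prod,
    volume_region_between_co (g := fun _ => 1) continuous_failBound.measurable,
    ← Measure.volume_eq_prod, volume_regionBetween_Ioo zero_le_one continuous_failBound
      continuous_const fun s hs => failBound_le_one hs.1.le hs.2.le]

theorem integral_one_sub_failBound :
    ∫ s in (0 : ℝ)..1, (1 - failBound s) = 3 / 10 - 2 * √5 / 25 * log ((3 + √5) / 2) := by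
  have : ∀ s, 1 - failBound s = (1 + s) / 2 - √(5 * s ^ 2 - 2 * s + 1) / 2 := by
    intro s
    unfold failBound
    ring
  simp_rw [this]
  rw [intervalIntegral.integral_sub (Continuous.intervalIntegrable (by fun_prop) _ _)
    (Continuous.intervalIntegrable (by fun_prop) _ _), intervalIntegral.integral_div,
    intervalIntegral.integral_div, intervalIntegral.integral_add intervalIntegrable_const
    intervalIntegral.intervalIntegrable_id, integral_sqrt_quadratic]
  norm_num
  ring

theorem preimage_failSet₁ :
    (fun p : ℝ × ℝ => (1 - p.2, 1 - p.1)) ⁻¹' failSet₁ = failSet₃ := by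
  ext ⟨s, t⟩
  simp only [failSet₁, failSet₃, triangle, mem_preimage, mem_inter_iff, mem_ofPred_eq]
  rw [show 1 - s - (1 - t) = t - s by ring, show 1 - (1 - s) = s by ring]
  constructor <;> rintro ⟨⟨h₁, h₂, h₃⟩, h⟩ <;>
    exact ⟨⟨by linarith, by linarith, by linarith⟩, by linarith⟩

theorem preimage_failSet₂ :
    (fun p : ℝ × ℝ => (p.1, 1 + p.1 - p.2)) ⁻¹' failSet₂ = failSet₃ := by
  ext ⟨s, t⟩
  simp only [failSet₂, failSet₃, triangle, mem_preimage, mem_inter_iff, mem_ofPred_eq]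
  rw [show 1 + s - t - s = 1 - t by ring, show 1 - (1 + s - t) = t - s by ring]
  constructor <;> rintro ⟨⟨h₁, h₂, h₃⟩, h⟩ <;>
    exact ⟨⟨by linarith, by linarith, by linarith⟩, h⟩

theorem volume_failSet₁ : volume failSet₁ = volume failSet₃ := by
  have h : MeasurePreserving (fun p : ℝ × ℝ => (1 - p.2, 1 - p.1)) volume volume :=
    measurePreserving_sub_swap volume 1
  rw [← preimage_failSet₁, h.measure_preimage measurableSet_failSet₁.nullMeasurableSet]

theorem volume_failSet₂ : volume failSet₂ = volume failSet₃ := by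
  have h : MeasurePreserving (fun p : ℝ × ℝ => (p.1, 1 + p.1 - p.2)) volume volume :=
    measurePreserving_fst_sub_snd volume 1
  rw [← preimage_failSet₂, h.measure_preimage measurableSet_failSet₂.nullMeasurableSet]

theorem volume_triangle_eq_add :
    volume triangle = volume altitudeRegion + 3 * volume failSet₃ := by
  rw [triangle_eq_union, measure_union disjoint_altitudeRegion_failSets
      (measurableSet_failSet₁.union (measurableSet_failSet₂.union measurableSet_failSet₃)),
    measure_union disjoint_failSet₁ (measurableSet_failSet₂.union measurableSet_failSet₃),
    measure_union disjoint_failSet₂ measurableSet_failSet₃, volume_failSet₁,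
    volume_failSet₂]
  ring

theorem volume_altitudeRegion :
    volume altitudeRegion = ENNReal.ofReal (2 / 25 * (3 * √5 * log ((3 + √5) / 2) - 5)) := by
  have hnonneg : 0 ≤ 3 / 10 - 2 * √5 / 25 * log ((3 + √5) / 2) :=
    integral_one_sub_failBound ▸ intervalIntegral.integral_nonneg zero_le_one
      fun s hs => sub_nonneg.2 (failBound_le_one hs.1 hs.2)
  have h := volume_triangle_eq_add
  rw [volume_triangle, volume_failSet₃, integral_one_sub_failBound] at h
  rw [show 2 / 25 * (3 * √5 * log ((3 + √5) / 2) - 5) =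
      1 / 2 - 3 * (3 / 10 - 2 * √5 / 25 * log ((3 + √5) / 2)) by ring,
    ENNReal.ofReal_sub _ (mul_nonneg zero_le_three hnonneg),
    ENNReal.ofReal_mul zero_le_three, ENNReal.ofReal_ofNat]
  exact ENNReal.eq_sub_of_add_eq (by finiteness) h.symm

theorem mem_altitudeRegion_iff {s t : ℝ} (hst : s ≤ t) : (s, t) ∈ altitudeRegion ↔
    s ∈ Icc 0 1 ∧ t ∈ Icc 0 1 ∧ IsAltitudeTriple s (t - s) (1 - t) := by
  constructor
  · rintro ⟨⟨h₀, hst, h₁⟩, h⟩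
    exact ⟨⟨h₀.le, by linarith⟩, ⟨by linarith, h₁.le⟩, h⟩
  · rintro ⟨⟨h₀, -⟩, ⟨-, h₁⟩, h⟩
    obtain ⟨hs, hts, ht⟩ := h.ne_zero
    exact ⟨⟨h₀.lt_of_ne' hs, hst.lt_of_ne (sub_ne_zero.1 hts).symm,
      h₁.lt_of_ne (sub_ne_zero.1 ht).symm⟩, h⟩

theorem setOf_isAltitudeTriple_eq :
    {p : ℝ × ℝ | p.1 ∈ Icc 0 1 ∧ p.2 ∈ Icc 0 1 ∧
      IsAltitudeTriple (min p.1 p.2) |p.1 - p.2| (1 - max p.1 p.2)} =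
    altitudeRegion ∪ Prod.swap ⁻¹' altitudeRegion := by
  ext ⟨s, t⟩
  simp only [mem_ofPred_eq, mem_union, mem_preimage, Prod.swap_prod_mk]
  rcases le_total s t with h | h
  · rw [min_eq_left h, max_eq_right h, abs_sub_comm, abs_of_nonneg (sub_nonneg.2 h),
      ← mem_altitudeRegion_iff h, or_iff_left fun h' => h'.1.2.1.not_ge h]
  · rw [min_eq_right h, max_eq_left h, abs_of_nonneg (sub_nonneg.2 h),
      ← and_left_comm, ← mem_altitudeRegion_iff h, or_iff_right fun h' => h'.1.2.1.not_ge h]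

theorem disjoint_altitudeRegion_swap : Disjoint altitudeRegion (Prod.swap ⁻¹' altitudeRegion) :=
  disjoint_left.2 fun _ h h' => h.1.2.1.not_gt h'.1.2.1

theorem broken_stick_altitudes_prob :
    volume {p : ℝ × ℝ | p.1 ∈ Set.Icc (0:ℝ) 1 ∧ p.2 ∈ Set.Icc (0:ℝ) 1 ∧
      1 / min p.1 p.2 + 1 / |p.1 - p.2| + 1 / (1 - max p.1 p.2) >
        2 * max (1 / min p.1 p.2) (max (1 / |p.1 - p.2|) (1 / (1 - max p.1 p.2)))} =
    ENNReal.ofReal (4 / 25 * (3 * Real.sqrt 5 * Real.log ((3 + Real.sqrt 5) / 2) - 5)) := by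
  change volume {p : ℝ × ℝ | p.1 ∈ Icc 0 1 ∧ p.2 ∈ Icc 0 1 ∧
    IsAltitudeTriple (min p.1 p.2) |p.1 - p.2| (1 - max p.1 p.2)} = _
  have hswap : MeasurePreserving Prod.swap (volume : Measure (ℝ × ℝ)) volume :=
    Measure.measurePreserving_swap
  rw [setOf_isAltitudeTriple_eq, measure_union disjoint_altitudeRegion_swap
      (measurableSet_altitudeRegion.preimage measurable_swap),
    hswap.measure_preimage measurableSet_altitudeRegion.nullMeasurableSet, ← two_mul,
    volume_altitudeRegion, ← ENNReal.ofReal_ofNat 2, ← ENNReal.ofReal_mul zero_le_two]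
  congr 1
  ring
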